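/- Fix channels h_1,…,h_{K_I} ∈ ℂ^M, a Hermitian positive semidefinite S ∈ ℂ^{M×M}, SINR targets γ_i > 0, noise powers σ_i² > 0, and power budget P > 0. Suppose (W_1,…,W_{K_I}, W_E) is feasible for problem (SDR1) and there exists an index m ∈ {1,…,K_I} with tr(h_m h_mᴴ W_E) = 0. Define W̃_m = W_m + W_E and W̃_i = W_i for i ≠ m. Then (W̃_1,…,W̃_{K_I}) is feasible for problem (SDR2), and its objective value equals that of the original solution: ∑_i tr(S W̃_i) = ∑_i tr(S W_i) + tr(S W_E). -/
import Mathlib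


open Matrix Finset
open scoped ComplexOrder

/-- Feasibility for problem (SDR1): PSD matrix variables `W i` (information covariances)
and `WE` (energy covariance), the SINR constraints and the total power constraint. -/
def SDR1Feasible {M KI : ℕ} (h : Fin KI → Fin M → ℂ) (γ σ2 : Fin KI → ℝ) (P : ℝ)
    (W : Fin KI → Matrix (Fin M) (Fin M) ℂ) (WE : Matrix (Fin M) (Fin M) ℂ) : Prop :=
  (∀ i, (W i).PosSemidef) ∧ WE.PosSemidef ∧
  (∀ i, 0 ≤ ((vecMulVec (h i) (star (h i)) * W i).trace).re / γ i
      - (∑ k ∈ Finset.univ.erase i, ((vecMulVec (h i) (star (h i)) * W k).trace).re)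
      - ((vecMulVec (h i) (star (h i)) * WE).trace).re - σ2 i) ∧
  (∑ i, ((W i).trace).re) + (WE.trace).re ≤ P

/-- Feasibility for problem (SDR2), i.e. (SDR1) with the energy covariance forced to `0`. -/
def SDR2Feasible {M KI : ℕ} (h : Fin KI → Fin M → ℂ) (γ σ2 : Fin KI → ℝ) (P : ℝ)
    (W : Fin KI → Matrix (Fin M) (Fin M) ℂ) : Prop :=
  (∀ i, (W i).PosSemidef) ∧
  (∀ i, 0 ≤ ((vecMulVec (h i) (star (h i)) * W i).trace).re / γ i
      - (∑ k ∈ Finset.univ.erase i, ((vecMulVec (h i) (star (h i)) * W k).trace).re)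
      - σ2 i) ∧
  (∑ i, ((W i).trace).re) ≤ P

private lemma sum_update_add_aux {KI : ℕ} (s : Finset (Fin KI)) (m : Fin KI) (hm : m ∈ s)
    (g : Fin KI → ℝ) (x : ℝ) :
    ∑ k ∈ s, Function.update g m (g m + x) k = (∑ k ∈ s, g k) + x := by
  rw [Finset.sum_update_of_mem hm, Finset.sdiff_singleton_eq_erase,
    ← Finset.add_sum_erase s g hm]
  ring

private lemma sum_F_update {M KI : ℕ} {m' : Fin KI} (F : Matrix (Fin M) (Fin M) ℂ → ℝ)
    (W : Fin KI → Matrix (Fin M) (Fin M) ℂ) (WE : Matrix (Fin M) (Fin M) ℂ)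
    (hFadd : F (W m' + WE) = F (W m') + F WE)
    (s : Finset (Fin KI)) (hm : m' ∈ s) :
    ∑ k ∈ s, F (Function.update W m' (W m' + WE) k)
      = (∑ k ∈ s, F (W k)) + F WE := by
  have hF : ∀ k, F (Function.update W m' (W m' + WE) k)
      = Function.update (fun k => F (W k)) m' (F (W m') + F WE) k := by
    intro k
    rcases eq_or_ne k m' with rfl | hk
    · simp [hFadd]
    · simp [Function.update_of_ne hk]
  simp_rw [hF]
  exact sum_update_add_aux s m' hm _ _

/-- if `(W, WE)` is feasible for (SDR1) and `tr(h_m h_mᴴ WE) = 0` for some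
`m`, then replacing `W m` by `W m + WE` (a dummy information beam for user `m`) gives a
feasible point of (SDR2) with the same objective value. -/
theorem dummy_beam_construction {M KI : ℕ}
    (h : Fin KI → Fin M → ℂ)
    (S : Matrix (Fin M) (Fin M) ℂ) (hS : S.PosSemidef)
    (γ σ2 : Fin KI → ℝ) (hγ : ∀ i, 0 < γ i) (hσ : ∀ i, 0 < σ2 i)
    (P : ℝ) (hP : 0 < P)
    (W : Fin KI → Matrix (Fin M) (Fin M) ℂ) (WE : Matrix (Fin M) (Fin M) ℂ)
    (hfeas : SDR1Feasible h γ σ2 P W WE)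
    (m : Fin KI)
    (hzero : (vecMulVec (h m) (star (h m)) * WE).trace = 0)
    (Wt : Fin KI → Matrix (Fin M) (Fin M) ℂ)
    (hWt : Wt = Function.update W m (W m + WE)) :
    SDR2Feasible h γ σ2 P Wt ∧
    (∑ i, ((S * Wt i).trace).re)
      = (∑ i, ((S * W i).trace).re) + ((S * WE).trace).re := by
  obtain ⟨hPSD, hPSDE, hSINR, hPow⟩ := hfeas
  subst hWt
  have hadd : ∀ (A : Matrix (Fin M) (Fin M) ℂ),
      (fun X => ((A * X).trace).re) (W m + WE)
        = (fun X => ((A * X).trace).re) (W m) + (fun X => ((A * X).trace).re) WE := by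
    intro A
    simp [Matrix.mul_add, Matrix.trace_add]
  refine ⟨⟨?_, ?_, ?_⟩, ?_⟩
  · intro i
    rcases eq_or_ne i m with rfl | hi
    · simpa using (hPSD i).add hPSDE
    · simpa [Function.update_of_ne hi] using hPSD i
  · intro i
    rcases eq_or_ne i m with rfl | hi
    · have h1 : ((vecMulVec (h i) (star (h i)) *
          Function.update W i (W i + WE) i).trace).re
          = ((vecMulVec (h i) (star (h i)) * W i).trace).re := by
        simp [Matrix.mul_add, Matrix.trace_add, hzero]
      have h2 : ∑ k ∈ Finset.univ.erase i,
          ((vecMulVec (h i) (star (h i)) * Function.update W i (W i + WE) k).trace).re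
          = ∑ k ∈ Finset.univ.erase i,
          ((vecMulVec (h i) (star (h i)) * W k).trace).re := by
        refine Finset.sum_congr rfl fun k hk => ?_
        rw [Function.update_of_ne (Finset.ne_of_mem_erase hk)]
      have h3 := hSINR i
      rw [hzero] at h3
      simp only [Complex.zero_re] at h3
      rw [h1, h2]
      linarith
    · have h1 : ((vecMulVec (h i) (star (h i)) *
          Function.update W m (W m + WE) i).trace).re
          = ((vecMulVec (h i) (star (h i)) * W i).trace).re := by
        rw [Function.update_of_ne hi]
      have h2 : ∑ k ∈ Finset.univ.erase i,
          ((vecMulVec (h i) (star (h i)) * Function.update W m (W m + WE) k).trace).re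
          = (∑ k ∈ Finset.univ.erase i,
          ((vecMulVec (h i) (star (h i)) * W k).trace).re)
          + ((vecMulVec (h i) (star (h i)) * WE).trace).re :=
        sum_F_update (F := fun X => ((vecMulVec (h i) (star (h i)) * X).trace).re) W WE
          (hadd _) _ (Finset.mem_erase.mpr ⟨(Ne.symm hi), Finset.mem_univ m⟩)
      have h3 := hSINR i
      rw [h1, h2]
      linarith
  · have h4 : ∑ i, ((Function.update W m (W m + WE) i).trace).re
        = (∑ i, ((W i).trace).re) + (WE.trace).re := by
      refine sum_F_update (fun X => (X.trace).re) W WE ?_ _ (Finset.mem_univ m)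
      simp [Matrix.trace_add]
    rw [h4]; exact hPow
  · exact sum_F_update (F := fun X => ((S * X).trace).re) W WE (hadd S) _ (Finset.mem_univ m)
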